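/- Let Q > 0, ω > 0, x > 0, y > 0 and ℓ ∈ ℕ, and let a₀, a₁, a₂ be the associated cubic coefficients of the extremal Reissner–Nordström effective potential. Then there do not exist r₁ > 0, r₂ > 0, r₃ > 0 such that X³ + a₂X² + a₁X + a₀ = (X−r₁)(X−r₂)(X−r₃) as real polynomials; that is, the cubic cannot have three positive real roots (counted with multiplicity). -/
import Mathlib


/-- The cubic coefficient `a₂` of the extremal RN effective potential. -/
noncomputable def a₂rn (Q ω x y : ℝ) (ℓ : ℕ) : ℝ :=
  ((ℓ : ℝ)*((ℓ : ℝ) + 1) + 4*Q^2*ω^2*(x^2 + 2*x - (y - 4)*y)) / (2*Q*ω^2*(x^2 + 2*x + y))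

/-- The cubic coefficient `a₁`. -/
noncomputable def a₁rn (Q x y : ℝ) : ℝ := -12*Q^2*(y - 1)*y / (x^2 + 2*x + y)

/-- The cubic coefficient `a₀`. -/
noncomputable def a₀rn (Q x y : ℝ) : ℝ := -16*Q^3*y^2 / (x^2 + 2*x + y)

/-- The cubic `X³ + a₂X² + a₁X + a₀` associated with the extremal RN effective
potential cannot have three positive real roots (counted with multiplicity). -/
theorem stmt_5 (Q ω x y : ℝ) (ℓ : ℕ) (hQ : 0 < Q) (hω : 0 < ω)
    (hx : 0 < x) (hy : 0 < y) :
    ¬ ∃ r₁ r₂ r₃ : ℝ, 0 < r₁ ∧ 0 < r₂ ∧ 0 < r₃ ∧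
      ∀ X : ℝ, X^3 + a₂rn Q ω x y ℓ * X^2 + a₁rn Q x y * X + a₀rn Q x y
        = (X - r₁)*(X - r₂)*(X - r₃) := by
  rintro ⟨r₁, r₂, r₃, h1, h2, h3, hX⟩
  have hD : 0 < x^2 + 2*x + y := by nlinarith
  have hA2 : a₂rn Q ω x y ℓ = -(r₁ + r₂ + r₃) := by
    linear_combination (hX 1 + hX (-1))/2 - hX 0
  have hA1 : a₁rn Q x y = r₁*r₂ + r₁*r₃ + r₂*r₃ := by
    linear_combination (hX 1 - hX (-1))/2
  -- from hA1 and positivity, y < 1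
  have hS2 : 0 < r₁*r₂ + r₁*r₃ + r₂*r₃ := by positivity
  have e1 : -12*Q^2*(y - 1)*y = (r₁*r₂ + r₁*r₃ + r₂*r₃) * (x^2 + 2*x + y) := by
    have := hA1
    unfold a₁rn at this
    field_simp at this
    linarith
  have hy1 : y < 1 := by
    by_contra h
    push_neg at h
    nlinarith [mul_pos hS2 hD, mul_nonneg (mul_nonneg (sq_nonneg Q) (sub_nonneg.2 h)) hy.le]
  -- from hA2, numerator must be negative
  have e2 : (ℓ : ℝ)*((ℓ : ℝ) + 1) + 4*Q^2*ω^2*(x^2 + 2*x - (y - 4)*y)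
      = -(r₁ + r₂ + r₃) * (2*Q*ω^2*(x^2 + 2*x + y)) := by
    have := hA2
    unfold a₂rn at this
    field_simp at this
    linarith
  have hℓ : (0:ℝ) ≤ (ℓ : ℝ)*((ℓ : ℝ) + 1) := by positivity
  have hS1 : 0 < r₁ + r₂ + r₃ := by positivity
  have hC : 0 < 2*Q*ω^2*(x^2 + 2*x + y) := by positivity
  have hpos : 0 < x^2 + 2*x - (y - 4)*y := by nlinarith
  have hq : 0 < 4*Q^2*ω^2 := by positivity
  nlinarith [mul_pos hS1 hC, mul_pos hq hpos]
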